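/- For 1 < i < j < m, Y_{i,j} := P(A_1^{(2)}(i,j) ∩ Ā_2 ∩ ⋯ ∩ Ā_m) = q_1 q_2 p^{m−2} [ q_1 (1 − p^{i−1} − (i−1) p^{i−2} q_2 p^{j−i}) + q_2 (1 − p^{j−1} − (j−1) q_1 p^{j−2}) ]. -/

import Mathlib

open MeasureTheory ProbabilityTheory Finset Filter Asymptotics

/-- `contaminatedEvent X m n` is the event that the block `X n, X (n+1), ..., X (n+m-1)` is
at most `1+1` contaminated: it contains at most one value `+1` and at most one value `-1`
(all remaining entries being `0`, given that the values lie in `{0, +1, -1}`). -/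
def contaminatedEvent {Ω : Type*} (X : ℕ → Ω → ℤ) (m n : ℕ) : Set Ω :=
  {ω | ((Finset.Icc n (n + m - 1)).filter (fun i => X i ω = 1)).card ≤ 1 ∧
       ((Finset.Icc n (n + m - 1)).filter (fun i => X i ω = -1)).card ≤ 1}

/-- The event that `X 1, ..., X m` are all `0` (a pure run). -/
def pureEvent {Ω : Type*} (X : ℕ → Ω → ℤ) (m : ℕ) : Set Ω :=
  {ω | ∀ i ∈ Finset.Icc 1 m, X i ω = 0}

/-- The event that `X i = +1` and all the other entries among `X 1, ..., X m` are `0`. -/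
def plusEvent {Ω : Type*} (X : ℕ → Ω → ℤ) (m i : ℕ) : Set Ω :=
  {ω | X i ω = 1 ∧ ∀ j ∈ Finset.Icc 1 m, j ≠ i → X j ω = 0}

/-- The event that `X i = -1` and all the other entries among `X 1, ..., X m` are `0`. -/
def minusEvent {Ω : Type*} (X : ℕ → Ω → ℤ) (m i : ℕ) : Set Ω :=
  {ω | X i ω = -1 ∧ ∀ j ∈ Finset.Icc 1 m, j ≠ i → X j ω = 0}

/-- The event that `X i = +1`, `X j = -1` and all the other entries among
`X 1, ..., X m` are `0`. -/
def twoEvent {Ω : Type*} (X : ℕ → Ω → ℤ) (m i j : ℕ) : Set Ω :=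
  {ω | X i ω = 1 ∧ X j ω = -1 ∧ ∀ l ∈ Finset.Icc 1 m, l ≠ i → l ≠ j → X l ω = 0}

/-!
The block `2, …, m + 1` contains the `+1` at `i` and the `-1` at `j`, so on `A₁⁽²⁾(i, j)` the
event `Ā₂` forces `X (m + 1) = ±1`; the substitution `X ↦ -X` exchanges the two signs. So let
`X (m + 1) = +1`, the other `+1` sit at `a` and the `-1` at `b`. Then one of the blocks `2, …, m`
is `1+1` contaminated iff either `X` vanishes on `m + 2, …, m + a` (then block `a + 1` is), or
`X` has a single `-1` there and vanishes on the rest of `m + 2, …, m + max a b` (then block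
`max a b + 1` is). These are disjoint cylinder events, so by independence this sign contributes
`q₁² q₂ p^(m-2) - q₁² q₂ p^(m+a-3) - (a-1) q₁² q₂² p^(m + max a b - 4)`.
-/

section

variable {Ω : Type*} {X : ℕ → Ω → ℤ}

def patternEvent (X : ℕ → Ω → ℤ) (s A B : Finset ℕ) : Set Ω :=
  {ω | (∀ a ∈ A, X a ω = 1) ∧ (∀ b ∈ B, X b ω = -1) ∧ ∀ l ∈ s, l ∉ A → l ∉ B → X l ω = 0}

def laterContaminatedEvent (X : ℕ → Ω → ℤ) (m : ℕ) : Set Ω :=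
  ⋃ n ∈ Icc 2 m, contaminatedEvent X m n

section Patterns

variable {s A B : Finset ℕ}

lemma twoEvent_eq_patternEvent (m i j : ℕ) :
    twoEvent X m i j = patternEvent X (Icc 1 m) {i} {j} := by
  ext ω
  simp [twoEvent, patternEvent]

lemma patternEvent_neg :
    patternEvent (fun l ω => -X l ω) s A B = patternEvent X s B A := by
  ext ω
  simp only [patternEvent, Set.mem_ofPred_eq, neg_eq_iff_eq_neg, neg_neg]
  exact ⟨fun ⟨hA, hB, h0⟩ => ⟨hB, hA, fun l hl hlB hlA => h0 l hl hlA hlB⟩,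
    fun ⟨hB, hA, h0⟩ => ⟨hA, hB, fun l hl hlA hlB => h0 l hl hlB hlA⟩⟩

lemma patternEvent_subset_patternEvent {s' A' B' : Finset ℕ} (hs : s ⊆ s')
    (hA : ∀ l, l ∈ A ↔ l ∈ A' ∧ l ∈ s) (hB : ∀ l, l ∈ B ↔ l ∈ B' ∧ l ∈ s) :
    patternEvent X s' A' B' ⊆ patternEvent X s A B := by
  rintro ω ⟨hωA, hωB, hω0⟩
  exact ⟨fun a ha => hωA a ((hA a).1 ha).1, fun b hb => hωB b ((hB b).1 hb).1,
    fun l hl hlA hlB => hω0 l (hs hl) (fun h => hlA ((hA l).2 ⟨h, hl⟩))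
      (fun h => hlB ((hB l).2 ⟨h, hl⟩))⟩

lemma disjoint_patternEvent_of_mem {s' A' B' : Finset ℕ} {a : ℕ} (ha : a ∈ A)
    (ha' : a ∈ B') : Disjoint (patternEvent X s A B) (patternEvent X s' A' B') :=
  Set.disjoint_left.2 fun _ h h' => by linarith [h.1 a ha, h'.2.1 a ha']

section Insert

variable {a : ℕ} {ω : Ω}

lemma mem_patternEvent_insert_of_eq_zero (hω : ω ∈ patternEvent X s A B) (ha : X a ω = 0) :
    ω ∈ patternEvent X (insert a s) A B :=
  ⟨hω.1, hω.2.1, fun l hl hlA hlB =>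
    (mem_insert.1 hl).elim (fun h => h ▸ ha) (hω.2.2 l · hlA hlB)⟩

lemma mem_patternEvent_insert_of_eq_one (hω : ω ∈ patternEvent X s A B) (ha : X a ω = 1) :
    ω ∈ patternEvent X (insert a s) (insert a A) B :=
  ⟨forall_mem_insert _ _ _ |>.2 ⟨ha, hω.1⟩, hω.2.1, fun l hl hlA hlB =>
    hω.2.2 l ((mem_insert.1 hl).resolve_left fun h => hlA (h ▸ mem_insert_self a A))
      (fun h => hlA (mem_insert_of_mem h)) hlB⟩

lemma mem_patternEvent_insert_of_eq_neg_one (hω : ω ∈ patternEvent X s A B)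
    (ha : X a ω = -1) : ω ∈ patternEvent X (insert a s) A (insert a B) :=
  ⟨hω.1, forall_mem_insert _ _ _ |>.2 ⟨ha, hω.2.1⟩, fun l hl hlA hlB =>
    hω.2.2 l ((mem_insert.1 hl).resolve_left fun h => hlB (h ▸ mem_insert_self a B)) hlA
      (fun h => hlB (mem_insert_of_mem h))⟩

end Insert

lemma patternEvent_eq_biInter (hA : A ⊆ s) (hB : B ⊆ s) (hAB : Disjoint A B) :
    patternEvent X s A B =
      ⋂ l ∈ s, X l ⁻¹' {if l ∈ A then 1 else if l ∈ B then -1 else 0} := by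
  ext ω
  simp only [patternEvent, Set.mem_ofPred_eq, Set.mem_iInter, Set.mem_preimage,
    Set.mem_singleton_iff]
  constructor
  · rintro ⟨hωA, hωB, hω0⟩ l hl
    split_ifs with hlA hlB
    exacts [hωA l hlA, hωB l hlB, hω0 l hl hlA hlB]
  · intro h
    refine ⟨fun a ha => by simpa [ha] using h a (hA ha), fun b hb => ?_,
      fun l hl hlA hlB => by simpa [hlA, hlB] using h l hl⟩
    simpa [hb, disjoint_right.1 hAB hb] using h b (hB hb)

variable [MeasurableSpace Ω]

lemma measurableSet_patternEvent (hX : ∀ l, Measurable (X l)) :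
    MeasurableSet (patternEvent X s A B) := by
  have hfib : ∀ l (c : ℤ), MeasurableSet {ω | X l ω = c} := fun l c =>
    hX l (measurableSet_singleton c)
  simp only [patternEvent, Set.ofPred_and, Set.ofPred_forall]
  exact (Finset.measurableSet_biInter _ fun a _ => hfib a 1).inter
    ((Finset.measurableSet_biInter _ fun b _ => hfib b (-1)).inter
      (Finset.measurableSet_biInter _ fun l _ => .iInter fun _ => .iInter fun _ => hfib l 0))

lemma measureReal_patternEvent {P : Measure Ω} (hX : iIndepFun X P) {p q₁ q₂ : ℝ}
    (hp : 0 ≤ p) (hq₁ : 0 ≤ q₁) (hq₂ : 0 ≤ q₂)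
    (h0 : ∀ l, P {ω | X l ω = 0} = ENNReal.ofReal p)
    (h1 : ∀ l, P {ω | X l ω = 1} = ENNReal.ofReal q₁)
    (h2 : ∀ l, P {ω | X l ω = -1} = ENNReal.ofReal q₂)
    (hA : A ⊆ s) (hB : B ⊆ s) (hAB : Disjoint A B) :
    P.real (patternEvent X s A B) = q₁ ^ #A * q₂ ^ #B * p ^ (#s - #A - #B) := by
  have hprod : P (patternEvent X s A B) = ∏ l ∈ s, if l ∈ A then ENNReal.ofReal q₁
      else if l ∈ B then ENNReal.ofReal q₂ else ENNReal.ofReal p := by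
    rw [patternEvent_eq_biInter hA hB hAB,
      hX.meas_biInter fun l _ => ⟨{_}, measurableSet_singleton _, rfl⟩]
    refine prod_congr rfl fun l _ => ?_
    split_ifs
    exacts [h1 l, h2 l, h0 l]
  have hsA : {l ∈ s | l ∈ A} = A := by rw [filter_mem_eq_inter, inter_eq_right.2 hA]
  have hsB : {l ∈ {l ∈ s | l ∉ A} | l ∈ B} = B := by
    ext l
    simp only [mem_filter]
    exact ⟨fun h => h.2, fun h => ⟨⟨hB h, disjoint_right.1 hAB h⟩, h⟩⟩
  have hs0 : #{l ∈ {l ∈ s | l ∉ A} | l ∉ B} = #s - #A - #B := by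
    rw [filter_filter, Nat.sub_sub, ← card_union_of_disjoint hAB,
      ← card_sdiff_of_subset (union_subset hA hB)]
    congr 1
    ext l
    simp [not_or]
  rw [measureReal_def, hprod, prod_ite, prod_ite, prod_const, prod_const, prod_const, hsA, hsB,
    hs0]
  simp [ENNReal.toReal_mul, ENNReal.toReal_pow, ENNReal.toReal_ofReal, hp, hq₁, hq₂, mul_assoc]

end Patterns

section Windows

variable {m n : ℕ} {ω : Ω}

lemma eq_of_mem_contaminatedEvent {a b : ℕ} {c : ℤ} (h : ω ∈ contaminatedEvent X m n)
    (hc : c = 1 ∨ c = -1) (ha : a ∈ Icc n (n + m - 1)) (hb : b ∈ Icc n (n + m - 1))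
    (hXa : X a ω = c) (hXb : X b ω = c) : a = b := by
  rcases hc with rfl | rfl
  · exact card_le_one.1 h.1 a (mem_filter.2 ⟨ha, hXa⟩) b (mem_filter.2 ⟨hb, hXb⟩)
  · exact card_le_one.1 h.2 a (mem_filter.2 ⟨ha, hXa⟩) b (mem_filter.2 ⟨hb, hXb⟩)

lemma eq_zero_of_mem_contaminatedEvent {a b l : ℕ}
    (hval : X l ω = 0 ∨ X l ω = 1 ∨ X l ω = -1) (h : ω ∈ contaminatedEvent X m n)
    (ha : a ∈ Icc n (n + m - 1)) (hb : b ∈ Icc n (n + m - 1)) (hl : l ∈ Icc n (n + m - 1))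
    (hXa : X a ω = 1) (hXb : X b ω = -1) (hla : l ≠ a) (hlb : l ≠ b) : X l ω = 0 := by
  rcases hval with h0 | h1 | h1
  · exact h0
  · exact absurd (eq_of_mem_contaminatedEvent h (.inl rfl) hl ha h1 hXa) hla
  · exact absurd (eq_of_mem_contaminatedEvent h (.inr rfl) hl hb h1 hXb) hlb

lemma mem_contaminatedEvent_of_mem_patternEvent {s A B : Finset ℕ}
    (hω : ω ∈ patternEvent X s A B) (hs : Icc n (n + m - 1) ⊆ s)
    (hA : #(Icc n (n + m - 1) ∩ A) ≤ 1) (hB : #(Icc n (n + m - 1) ∩ B) ≤ 1) :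
    ω ∈ contaminatedEvent X m n := by
  obtain ⟨hωA, hωB, hω0⟩ := hω
  constructor
  · refine (card_le_card fun l hl => ?_).trans hA
    rw [mem_filter] at hl
    refine mem_inter.2 ⟨hl.1, by_contra fun hlA => ?_⟩
    by_cases hlB : l ∈ B
    · linarith [hωB l hlB, hl.2]
    · linarith [hω0 l (hs hl.1) hlA hlB, hl.2]
  · refine (card_le_card fun l hl => ?_).trans hB
    rw [mem_filter] at hl
    refine mem_inter.2 ⟨hl.1, by_contra fun hlB => ?_⟩
    by_cases hlA : l ∈ A
    · linarith [hωA l hlA, hl.2]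
    · linarith [hω0 l (hs hl.1) hlA hlB, hl.2]

lemma mem_laterContaminatedEvent :
    ω ∈ laterContaminatedEvent X m ↔ ∃ n ∈ Icc 2 m, ω ∈ contaminatedEvent X m n := by
  simp [laterContaminatedEvent]

lemma laterContaminatedEvent_neg :
    laterContaminatedEvent (fun l ω => -X l ω) m = laterContaminatedEvent X m := by
  ext ω
  simp only [laterContaminatedEvent, contaminatedEvent, Set.mem_iUnion, Set.mem_ofPred_eq,
    neg_eq_iff_eq_neg, neg_neg, and_comm]

lemma measurableSet_laterContaminatedEvent [MeasurableSpace Ω] (hX : ∀ l, Measurable (X l)) :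
    MeasurableSet (laterContaminatedEvent X m) := by
  have hcount : ∀ n (c : ℤ), Measurable fun ω => #{l ∈ Icc n (n + m - 1) | X l ω = c} := by
    intro n c
    simp_rw [card_filter]
    exact Finset.measurable_sum _ fun l _ =>
      Measurable.ite (hX l (measurableSet_singleton c)) measurable_const measurable_const
  exact Finset.measurableSet_biUnion _ fun n _ =>
    (hcount n 1 measurableSet_Iic).inter (hcount n (-1) measurableSet_Iic)

end Windows

section Decomposition

variable {m a b : ℕ}

lemma patternEvent_inter_laterContaminatedEvent
    (hval : ∀ l ω, X l ω = 0 ∨ X l ω = 1 ∨ X l ω = -1) (ha : 0 < a) (hb : 0 < b)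
    (ham : a < m) (hbm : b < m) :
    patternEvent X (Icc 1 (m + 1)) {m + 1, a} {b} ∩ laterContaminatedEvent X m =
      patternEvent X (Icc 1 (m + a)) {m + 1, a} {b} ∪
        ⋃ l ∈ Icc (m + 2) (m + a), patternEvent X (Icc 1 (m + max a b)) {m + 1, a} {l, b} := by
  ext ω
  constructor
  · rintro ⟨⟨hωA, hωB, hω0⟩, hU⟩
    obtain ⟨n, hn, hc⟩ := mem_laterContaminatedEvent.1 hU
    rw [mem_Icc] at hn
    simp only [mem_insert, mem_singleton, forall_eq_or_imp, forall_eq] at hωA hωB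
    obtain ⟨hXm, hXa⟩ := hωA
    have han : a < n := by
      by_contra
      have := eq_of_mem_contaminatedEvent hc (.inl rfl) (mem_Icc.2 (by omega))
        (mem_Icc.2 (by omega)) hXa hXm
      omega
    by_cases hzero : ∀ l ∈ Icc (m + 2) (m + a), X l ω = 0
    · refine Or.inl ⟨by simp [hXm, hXa], by simp [hωB], fun l hl hlA hlB => ?_⟩
      rw [mem_Icc] at hl
      by_cases hlm : l ≤ m + 1
      · exact hω0 l (mem_Icc.2 ⟨hl.1, hlm⟩) hlA hlB
      · exact hzero l (mem_Icc.2 (by omega))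
    simp only [not_forall] at hzero
    obtain ⟨l, hl, hXl⟩ := hzero
    rw [mem_Icc] at hl
    -- `m + 1` already carries the `+1` of block `n`, so `X l = -1` ...
    have hXl' : X l ω = -1 := by
      rcases hval l ω with h | h | h
      · exact absurd h hXl
      · have := eq_of_mem_contaminatedEvent hc (.inl rfl) (mem_Icc.2 (by omega))
          (mem_Icc.2 (by omega)) h hXm
        omega
      · exact h
    -- ... and then `l` carries its `-1`, which pushes block `n` past `b`
    have hbn : b < n := by
      by_contra
      have := eq_of_mem_contaminatedEvent hc (.inr rfl) (mem_Icc.2 (by omega))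
        (mem_Icc.2 (by omega)) hωB hXl'
      omega
    refine Or.inr (Set.mem_iUnion₂.2 ⟨l, mem_Icc.2 hl, by simp [hXm, hXa],
      by simp [hXl', hωB], fun l' hl' hlA hlB => ?_⟩)
    simp only [mem_Icc, mem_insert, mem_singleton, not_or] at hl' hlA hlB
    by_cases hlm : l' ≤ m + 1
    · exact hω0 l' (mem_Icc.2 (by omega)) (by grind) (by grind)
    · exact eq_zero_of_mem_contaminatedEvent (hval l' ω) hc (mem_Icc.2 (by omega))
        (mem_Icc.2 (by omega)) (mem_Icc.2 (by omega)) hXm hXl' hlA.1 hlB.1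
  · rintro (hω | hω)
    · refine ⟨patternEvent_subset_patternEvent (Icc_subset_Icc le_rfl (by omega))
        (fun l => by grind) (fun l => by grind) hω,
        mem_laterContaminatedEvent.2 ⟨a + 1, mem_Icc.2 (by omega), ?_⟩⟩
      refine mem_contaminatedEvent_of_mem_patternEvent hω (Icc_subset_Icc (by omega) (by omega))
        (card_le_one.2 fun x hx y hy => ?_) (card_le_one.2 fun x hx y hy => ?_) <;>
      · simp only [mem_inter, mem_Icc, mem_insert, mem_singleton] at hx hy
        omega
    · obtain ⟨l, hl, hω⟩ := Set.mem_iUnion₂.1 hω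
      rw [mem_Icc] at hl
      refine ⟨patternEvent_subset_patternEvent (Icc_subset_Icc le_rfl (by omega))
        (fun l => by grind) (fun l => by grind) hω,
        mem_laterContaminatedEvent.2 ⟨max a b + 1, mem_Icc.2 (by omega), ?_⟩⟩
      refine mem_contaminatedEvent_of_mem_patternEvent hω (Icc_subset_Icc (by omega) (by omega))
        (card_le_one.2 fun x hx y hy => ?_) (card_le_one.2 fun x hx y hy => ?_) <;>
      · simp only [mem_inter, mem_Icc, mem_insert, mem_singleton] at hx hy
        omega

lemma twoEvent_inter_iInter_compl_contaminatedEvent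
    (hval : ∀ l ω, X l ω = 0 ∨ X l ω = 1 ∨ X l ω = -1) {i j : ℕ} (hm : 2 ≤ m)
    (hi : i ∈ Icc 1 m) (hj : j ∈ Icc 1 m) :
    twoEvent X m i j ∩ ⋂ n ∈ Icc 2 m, (contaminatedEvent X m n)ᶜ =
      (patternEvent X (Icc 1 (m + 1)) {m + 1, i} {j} \ laterContaminatedEvent X m) ∪
        (patternEvent X (Icc 1 (m + 1)) {i} {m + 1, j} \ laterContaminatedEvent X m) := by
  rw [mem_Icc] at hi hj
  rw [← Set.union_sdiff_distrib, ← Set.compl_iUnion₂, ← Set.sdiff_eq,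
    twoEvent_eq_patternEvent]
  ext ω
  refine ⟨fun ⟨hω, hU⟩ => ⟨?_, hU⟩, fun ⟨hω, hU⟩ => ⟨?_, hU⟩⟩
  · rw [← insert_Icc_right_eq_Icc_add_one (by omega)]
    rcases hval (m + 1) ω with h | h | h
    · refine absurd (mem_laterContaminatedEvent.2 ⟨2, mem_Icc.2 (by omega), ?_⟩) hU
      refine mem_contaminatedEvent_of_mem_patternEvent (mem_patternEvent_insert_of_eq_zero hω h)
        (by rw [insert_Icc_right_eq_Icc_add_one (by omega)]
            exact Icc_subset_Icc (by omega) (by omega))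
        (card_le_one.2 fun x hx y hy => ?_) (card_le_one.2 fun x hx y hy => ?_) <;>
      · simp only [mem_inter, mem_singleton] at hx hy
        omega
    · exact .inl (mem_patternEvent_insert_of_eq_one hω h)
    · exact .inr (mem_patternEvent_insert_of_eq_neg_one hω h)
  · rcases hω with hω | hω <;>
    exact patternEvent_subset_patternEvent (Icc_subset_Icc le_rfl (by omega))
      (fun l => by grind) (fun l => by grind) hω

end Decomposition

section Probability

variable [MeasurableSpace Ω] {P : Measure Ω} [IsFiniteMeasure P] {p q₁ q₂ : ℝ} {m a b : ℕ}

lemma measureReal_patternEvent_union_iUnion (hmeas : ∀ l, Measurable (X l))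
    (hX : iIndepFun X P) (hp : 0 ≤ p) (hq₁ : 0 ≤ q₁) (hq₂ : 0 ≤ q₂)
    (h0 : ∀ l, P {ω | X l ω = 0} = ENNReal.ofReal p)
    (h1 : ∀ l, P {ω | X l ω = 1} = ENNReal.ofReal q₁)
    (h2 : ∀ l, P {ω | X l ω = -1} = ENNReal.ofReal q₂)
    (ha : 0 < a) (hb : 0 < b) (hab : a ≠ b) (ham : a < m) (hbm : b < m) :
    P.real (patternEvent X (Icc 1 (m + a)) {m + 1, a} {b} ∪
        ⋃ l ∈ Icc (m + 2) (m + a), patternEvent X (Icc 1 (m + max a b)) {m + 1, a} {l, b}) =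
      q₁ ^ 2 * q₂ * p ^ (m + a - 3) +
        ((a : ℝ) - 1) * (q₁ ^ 2 * q₂ ^ 2 * p ^ (m + max a b - 4)) := by
  have hdisj : Disjoint (patternEvent X (Icc 1 (m + a)) {m + 1, a} {b})
      (⋃ l ∈ Icc (m + 2) (m + a), patternEvent X (Icc 1 (m + max a b)) {m + 1, a} {l, b}) := by
    refine Set.disjoint_iUnion₂_right.2 fun l hl => Set.disjoint_left.2 fun ω h h' => ?_
    rw [mem_Icc] at hl
    have := h'.2.1 l (by simp)
    have := h.2.2 l (mem_Icc.2 (by omega)) (by grind) (by grind)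
    omega
  have hpair : Set.PairwiseDisjoint ↑(Icc (m + 2) (m + a))
      fun l => patternEvent X (Icc 1 (m + max a b)) {m + 1, a} {l, b} := by
    intro l hl l' hl' hne
    refine Set.disjoint_left.2 fun ω h h' => ?_
    simp only [coe_Icc, Set.mem_Icc] at hl hl'
    have := h.2.1 l (by simp)
    have := h'.2.2 l (mem_Icc.2 (by omega)) (by grind) (by grind)
    omega
  have hterm : ∀ l ∈ Icc (m + 2) (m + a),
      P.real (patternEvent X (Icc 1 (m + max a b)) {m + 1, a} {l, b}) =
        q₁ ^ 2 * q₂ ^ 2 * p ^ (m + max a b - 4) := by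
    intro l hl
    rw [mem_Icc] at hl
    rw [measureReal_patternEvent hX hp hq₁ hq₂ h0 h1 h2 (by grind)
        (by grind) (by grind [disjoint_left]),
      card_pair (by omega), card_pair (by omega), Nat.card_Icc,
      show m + max a b + 1 - 1 - 2 - 2 = m + max a b - 4 by omega]
  rw [measureReal_union hdisj
      (Finset.measurableSet_biUnion _ fun l _ => measurableSet_patternEvent hmeas)
      (measure_ne_top P _) (measure_ne_top P _),
    measureReal_biUnion_finset hpair fun l _ => measurableSet_patternEvent hmeas,
    sum_congr rfl hterm, sum_const, Nat.card_Icc, nsmul_eq_mul,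
    show m + a + 1 - (m + 2) = a - 1 by omega, Nat.cast_sub ha, Nat.cast_one,
    measureReal_patternEvent hX hp hq₁ hq₂ h0 h1 h2 (by grind)
      (by grind) (by grind [disjoint_left]),
    card_pair (by omega), card_singleton, Nat.card_Icc, pow_one,
    show m + a + 1 - 1 - 2 - 1 = m + a - 3 by omega]

lemma measureReal_patternEvent_sdiff_laterContaminatedEvent (hmeas : ∀ l, Measurable (X l))
    (hX : iIndepFun X P) (hval : ∀ l ω, X l ω = 0 ∨ X l ω = 1 ∨ X l ω = -1)
    (hp : 0 ≤ p) (hq₁ : 0 ≤ q₁) (hq₂ : 0 ≤ q₂)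
    (h0 : ∀ l, P {ω | X l ω = 0} = ENNReal.ofReal p)
    (h1 : ∀ l, P {ω | X l ω = 1} = ENNReal.ofReal q₁)
    (h2 : ∀ l, P {ω | X l ω = -1} = ENNReal.ofReal q₂)
    (ha : 0 < a) (hb : 0 < b) (hab : a ≠ b) (ham : a < m) (hbm : b < m) :
    P.real (patternEvent X (Icc 1 (m + 1)) {m + 1, a} {b} \ laterContaminatedEvent X m) =
      q₁ ^ 2 * q₂ * p ^ (m - 2) - (q₁ ^ 2 * q₂ * p ^ (m + a - 3) +
        ((a : ℝ) - 1) * (q₁ ^ 2 * q₂ ^ 2 * p ^ (m + max a b - 4))) := by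
  rw [← Set.sdiff_self_inter, measureReal_sdiff Set.inter_subset_left
      ((measurableSet_patternEvent hmeas).inter
        (measurableSet_laterContaminatedEvent hmeas)),
    patternEvent_inter_laterContaminatedEvent hval ha hb ham hbm,
    measureReal_patternEvent_union_iUnion hmeas hX hp hq₁ hq₂ h0 h1 h2 ha hb hab ham hbm,
    measureReal_patternEvent hX hp hq₁ hq₂ h0 h1 h2 (by grind)
      (by grind) (by grind [disjoint_left]),
    card_pair (by omega), card_singleton, Nat.card_Icc, pow_one,
    show m + 1 + 1 - 1 - 2 - 1 = m - 2 by omega]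

lemma measureReal_patternEvent_sdiff_laterContaminatedEvent' (hmeas : ∀ l, Measurable (X l))
    (hX : iIndepFun X P) (hval : ∀ l ω, X l ω = 0 ∨ X l ω = 1 ∨ X l ω = -1)
    (hp : 0 ≤ p) (hq₁ : 0 ≤ q₁) (hq₂ : 0 ≤ q₂)
    (h0 : ∀ l, P {ω | X l ω = 0} = ENNReal.ofReal p)
    (h1 : ∀ l, P {ω | X l ω = 1} = ENNReal.ofReal q₁)
    (h2 : ∀ l, P {ω | X l ω = -1} = ENNReal.ofReal q₂)
    (ha : 0 < a) (hb : 0 < b) (hab : a ≠ b) (ham : a < m) (hbm : b < m) :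
    P.real (patternEvent X (Icc 1 (m + 1)) {a} {m + 1, b} \ laterContaminatedEvent X m) =
      q₁ * q₂ ^ 2 * p ^ (m - 2) - (q₁ * q₂ ^ 2 * p ^ (m + b - 3) +
        ((b : ℝ) - 1) * (q₁ ^ 2 * q₂ ^ 2 * p ^ (m + max a b - 4))) := by
  have h := measureReal_patternEvent_sdiff_laterContaminatedEvent (X := fun l ω => -X l ω)
    (fun l => (hmeas l).neg) (hX.comp (fun _ x => -x) fun _ => measurable_neg)
    (fun l ω => by rcases hval l ω with h | h | h <;> simp [h]) hp hq₂ hq₁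
    (by simpa using h0) (by simpa [neg_eq_iff_eq_neg] using h2)
    (by simpa [neg_eq_iff_eq_neg] using h1) hb ha hab.symm hbm ham
  rw [patternEvent_neg, laterContaminatedEvent_neg, max_comm] at h
  rw [h]
  ring

end Probability

end

theorem Y_two_middle_middle_general
    {Ω : Type*} [MeasurableSpace Ω] (P : Measure Ω) [IsProbabilityMeasure P]
    (X : ℕ → Ω → ℤ) (hmeas : ∀ i, Measurable (X i))
    (hindep : iIndepFun X P)
    (p q1 q2 : ℝ) (hp : 0 < p) (hq1 : 0 < q1) (hq2 : 0 < q2)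
    (h0 : ∀ i, P {ω | X i ω = 0} = ENNReal.ofReal p)
    (h1 : ∀ i, P {ω | X i ω = 1} = ENNReal.ofReal q1)
    (h2 : ∀ i, P {ω | X i ω = -1} = ENNReal.ofReal q2)
    (hval : ∀ i ω, X i ω = 0 ∨ X i ω = 1 ∨ X i ω = -1)
    (m i j : ℕ) (hi1 : 1 < i) (hij : i < j) (hjm : j < m) :
    (P (twoEvent X m i j ∩ ⋂ n ∈ Finset.Icc 2 m, (contaminatedEvent X m n)ᶜ)).toReal =
      q1 * q2 * p ^ (m - 2) *
        (q1 * (1 - p ^ (i - 1) - ((i : ℝ) - 1) * p ^ (i - 2) * q2 * p ^ (j - i)) +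
         q2 * (1 - p ^ (j - 1) - ((j : ℝ) - 1) * q1 * p ^ (j - 2))) := by
  rw [← measureReal_def, twoEvent_inter_iInter_compl_contaminatedEvent hval (by omega)
      (mem_Icc.2 (by omega)) (mem_Icc.2 (by omega)),
    measureReal_union ((disjoint_patternEvent_of_mem (a := m + 1) (by simp) (by simp)).mono
        Set.sdiff_subset Set.sdiff_subset)
      ((measurableSet_patternEvent hmeas).diff (measurableSet_laterContaminatedEvent hmeas))
      (measure_ne_top P _) (measure_ne_top P _),
    measureReal_patternEvent_sdiff_laterContaminatedEvent hmeas hindep hval hp.le hq1.le hq2.le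
      h0 h1 h2 (by omega) (by omega) hij.ne (by omega) hjm,
    measureReal_patternEvent_sdiff_laterContaminatedEvent' hmeas hindep hval hp.le hq1.le hq2.le
      h0 h1 h2 (by omega) (by omega) hij.ne (by omega) hjm,
    max_eq_right hij.le, show m + i - 3 = (m - 2) + (i - 1) by omega,
    show m + j - 3 = (m - 2) + (j - 1) by omega,
    show m + j - 4 = (m - 2) + ((i - 2) + (j - i)) by omega,
    show j - 2 = (i - 2) + (j - i) by omega]
  simp only [pow_add]
  ring

theorem Y_two_middle_middle
    {Ω : Type*} [MeasurableSpace Ω] (P : Measure Ω) [IsProbabilityMeasure P]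
    (X : ℕ → Ω → ℤ) (hmeas : ∀ i, Measurable (X i))
    (hindep : iIndepFun X P)
    (p q1 q2 : ℝ) (hp : 0 < p) (hq1 : 0 < q1) (hq2 : 0 < q2) (hsum : p + q1 + q2 = 1)
    (h0 : ∀ i, P {ω | X i ω = 0} = ENNReal.ofReal p)
    (h1 : ∀ i, P {ω | X i ω = 1} = ENNReal.ofReal q1)
    (h2 : ∀ i, P {ω | X i ω = -1} = ENNReal.ofReal q2)
    (hval : ∀ i ω, X i ω = 0 ∨ X i ω = 1 ∨ X i ω = -1)
    (m i j : ℕ) (hm : 2 ≤ m) (hi1 : 1 < i) (hij : i < j) (hjm : j < m) :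
    (P (twoEvent X m i j ∩ ⋂ n ∈ Finset.Icc 2 m, (contaminatedEvent X m n)ᶜ)).toReal =
      q1 * q2 * p ^ (m - 2) *
        (q1 * (1 - p ^ (i - 1) - ((i : ℝ) - 1) * p ^ (i - 2) * q2 * p ^ (j - i)) +
         q2 * (1 - p ^ (j - 1) - ((j : ℝ) - 1) * q1 * p ^ (j - 2))) :=
  Y_two_middle_middle_general P X hmeas hindep p q1 q2 hp hq1 hq2 h0 h1 h2 hval m i j hi1 hij hjm
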